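/- Löb's theorem: let T be a computably axiomatized extension of Peano arithmetic whose provability predicate satisfies the Hilbert–Bernays–Löb conditions and the diagonal lemma. For any sentence P, if T ⊢ □P → P then T ⊢ P. Consequently, any Henkin sentence H with T ⊢ H ↔ □H is provable in T. -/

import Mathlib

/-! Diagonalise `□x → P` to get `G ↔ (□G → P)`. Necessitation and distribution turn
`G → (□G → P)` into `□G → (□□G → □P)`, which together with `□G → □□G` collapses to `□G → □P`,
hence to `□G → P` under the hypothesis `□P → P`. By the fixed point `G` is then provable, so is
`□G` by necessitation, and therefore `P`. A Henkin sentence `H` satisfies `□H → H`, so it is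
the case `P = H`. -/

open FirstOrder FirstOrder.Language

/-- The function symbols of the language of arithmetic: `0`, `S`, `+`, `×`. -/
inductive ArithFunc : ℕ → Type
  | zero : ArithFunc 0
  | succ : ArithFunc 1
  | add : ArithFunc 2
  | mul : ArithFunc 2

/-- The first-order language of arithmetic `{0, S, +, ×, =}` (equality is built in). -/
def LA : FirstOrder.Language := ⟨ArithFunc, fun _ => Empty⟩

instance : Encodable (Σ n, LA.Functions n) :=
  Encodable.ofLeftInverse
    (fun f => match f with
      | ⟨_, .zero⟩ => 0 | ⟨_, .succ⟩ => 1 | ⟨_, .add⟩ => 2 | ⟨_, .mul⟩ => 3)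
    (fun n => match n with
      | 0 => ⟨0, .zero⟩ | 1 => ⟨1, .succ⟩ | 2 => ⟨2, .add⟩ | _ => ⟨2, .mul⟩)
    (fun f => by rcases f with ⟨_, f⟩; cases f <;> rfl)

instance (n : ℕ) : Encodable (LA.Relations n) := inferInstanceAs (Encodable Empty)

/-- The term `0`. -/
def zeroT {α : Type} : LA.Term α := Term.func ArithFunc.zero ![]
/-- The successor of a term. -/
def succT {α : Type} (t : LA.Term α) : LA.Term α := Term.func ArithFunc.succ ![t]
/-- The sum of two terms. -/
def addT {α : Type} (t s : LA.Term α) : LA.Term α := Term.func ArithFunc.add ![t, s]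
/-- The product of two terms. -/
def mulT {α : Type} (t s : LA.Term α) : LA.Term α := Term.func ArithFunc.mul ![t, s]

/-- The numeral `n̄ = Sⁿ(0)`. -/
def num {α : Type} : ℕ → LA.Term α
  | 0 => zeroT
  | n + 1 => succT (num n)

/-- Robinson's arithmetic `Q`. -/
def Q : LA.Theory :=
  { ∀' ∼(succT &0 =' zeroT),
    ∀' ∀' (succT &0 =' succT &1 ⟹ &0 =' &1),
    ∀' ((&0 =' zeroT) ⊔ ∃' (&0 =' succT &1)),
    ∀' (addT &0 zeroT =' &0),
    ∀' ∀' (addT &0 (succT &1) =' succT (addT &0 &1)),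
    ∀' (mulT &0 zeroT =' zeroT),
    ∀' ∀' (mulT &0 (succT &1) =' addT (mulT &0 &1) &0) }

/-- The standard model `ℕ` of arithmetic. -/
instance : LA.Structure ℕ where
  funMap {_} f := match f with
    | .zero => fun _ => 0
    | .succ => fun v => v 0 + 1
    | .add => fun v => v 0 + v 1
    | .mul => fun v => v 0 * v 1
  RelMap {_} r := Empty.elim r

/-- The Gödel number of a sentence, via Mathlib's encoding of first-order formulas. -/
def gnum (φ : LA.Sentence) : ℕ := Encodable.encode (BoundedFormula.listEncode φ)

/-- A theory is computably axiomatized when its set of (Gödel numbers of) axioms is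
decidable. -/
def ComputablyAxiomatized (T : LA.Theory) : Prop :=
  ComputablePred fun n : ℕ => ∃ φ ∈ T, gnum φ = n

/-- The older Mathlib `Formula.iAlls`: `iAlls f φ` transforms a `L.Formula α` into a
`L.Formula β` by renaming variables with `f` and universally quantifying over all variables
`Sum.inr _`. -/
noncomputable def formulaIAllsOld {L : FirstOrder.Language} {α β γ : Type*} [Finite γ]
    (f : α → β ⊕ γ) (φ : L.Formula α) : L.Formula β :=
  let e := Classical.choice (Classical.choose_spec (Finite.exists_equiv_fin γ))
  (BoundedFormula.relabel (fun a => Sum.map id e (f a)) φ).alls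

/-- The induction axiom for a formula `φ(x⃗, y)` (parameters `x⃗`, induction variable `y`):
`∀x⃗ ∀y ((φ(x⃗,0) ∧ ∀u (φ(x⃗,u) → φ(x⃗,S u))) → φ(x⃗,y))`. -/
noncomputable def indAxiom {m : ℕ} (φ : LA.Formula (Fin m ⊕ Fin 1)) : LA.Sentence :=
  let subLast : LA.Term (Fin m ⊕ Fin 1) → LA.Formula (Fin m ⊕ Fin 1) := fun t =>
    BoundedFormula.subst φ (Sum.elim (fun i => Term.var (Sum.inl i)) fun _ => t)
  let base := subLast zeroT
  let step : LA.Formula (Fin m) :=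
    formulaIAllsOld (id : Fin m ⊕ Fin 1 → Fin m ⊕ Fin 1)
      (φ ⟹ subLast (succT (Term.var (Sum.inr 0))))
  formulaIAllsOld (Sum.inr : Fin m ⊕ Fin 1 → Empty ⊕ (Fin m ⊕ Fin 1))
    ((base ⊓ Formula.relabel Sum.inl step) ⟹ φ)

/-- Peano arithmetic: Robinson's arithmetic together with the induction scheme. -/
noncomputable def PA : LA.Theory :=
  Q ∪ ⋃ m : ℕ, Set.range fun φ : LA.Formula (Fin m ⊕ Fin 1) => indAxiom φ

/-- `□A`: the sentence `Bew(⌜A⌝)`. -/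
def boxS (Bew : LA.Formula (Fin 1)) (A : LA.Sentence) : LA.Sentence :=
  BoundedFormula.subst Bew fun _ => (num (gnum A) : LA.Term Empty)


namespace FirstOrder.Language.Theory

variable {L : Language} {T : L.Theory} {α : Type*} {n : ℕ}

theorem models_of_imp {φ ψ : L.BoundedFormula α n} (h : φ ⟹[T] ψ) (hφ : T ⊨ᵇ φ) : T ⊨ᵇ ψ :=
  fun M v xs => h M v xs (hφ M v xs)

theorem Imp.mp_imp {φ ψ θ : L.BoundedFormula α n} (hψθ : φ ⟹[T] (ψ ⟹ θ)) (hψ : φ ⟹[T] ψ) :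
    φ ⟹[T] θ :=
  fun M v xs hφ => hψθ M v xs hφ (hψ M v xs hφ)

theorem subst_relabel_sentence_iff (φ : L.Sentence) (σ : α → L.Term Empty) :
    ((φ.relabel Empty.elim : L.Formula α).subst σ) ⇔[T] φ := fun M v xs => by
  rw [BoundedFormula.realize_iff, BoundedFormula.realize_subst, Subsingleton.elim xs default]
  exact Formula.realize_relabel.trans (by rw [Subsingleton.elim (_ ∘ _) v]; rfl)

structure HBLConditions (T : L.Theory) (box : L.Sentence → L.Sentence) : Prop where
  nec : ∀ A, T ⊨ᵇ A → T ⊨ᵇ box A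
  distrib_imp : ∀ A B, box (A ⟹ B) ⟹[T] (box A ⟹ box B)
  four : ∀ A, box A ⟹[T] box (box A)

namespace HBLConditions

variable {box : L.Sentence → L.Sentence}

theorem box_mono (hbox : T.HBLConditions box) {A B : L.Sentence} (h : A ⟹[T] B) :
    box A ⟹[T] box B :=
  models_of_imp (hbox.distrib_imp A B) (hbox.nec _ h)

theorem models_of_box_imp (hbox : T.HBLConditions box) {P G : L.Sentence}
    (hG : G ⇔[T] (box G ⟹ P)) (hP : box P ⟹[T] P) : T ⊨ᵇ P := by
  have hGP : box G ⟹[T] P :=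
    (((hbox.box_mono hG.mp).trans (hbox.distrib_imp _ _)).mp_imp (hbox.four G)).trans hP
  exact models_of_imp hGP (hbox.nec G (models_of_imp hG.mpr hGP))

theorem models_of_iff_box (hbox : T.HBLConditions box) {H G : L.Sentence}
    (hG : G ⇔[T] (box G ⟹ H)) (hH : H ⇔[T] box H) : T ⊨ᵇ H :=
  hbox.models_of_box_imp hG hH.mpr

end HBLConditions

end FirstOrder.Language.Theory

theorem exists_iff_boxS_imp {T : LA.Theory} {Bew : LA.Formula (Fin 1)}
    (hdiag : ∀ C : LA.Formula (Fin 1), ∃ G : LA.Sentence,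
      T ⊨ᵇ (G ⇔ BoundedFormula.subst C fun _ => (num (gnum G) : LA.Term Empty)))
    (P : LA.Sentence) : ∃ G : LA.Sentence, G ⇔[T] (boxS Bew G ⟹ P) := by
  obtain ⟨G, hG⟩ := hdiag (Bew ⟹ P.relabel Empty.elim)
  exact ⟨G, Theory.Iff.trans hG
    ((Theory.Iff.refl _).imp (Theory.subst_relabel_sentence_iff P _))⟩

theorem lob_theorem_general (T : LA.Theory)
    (Bew : LA.Formula (Fin 1))
    (hbl1 : ∀ A : LA.Sentence, T ⊨ᵇ A → T ⊨ᵇ boxS Bew A)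
    (hbl2 : ∀ A B : LA.Sentence, T ⊨ᵇ (boxS Bew (A ⟹ B) ⟹ boxS Bew A ⟹ boxS Bew B))
    (hbl3 : ∀ A : LA.Sentence, T ⊨ᵇ (boxS Bew A ⟹ boxS Bew (boxS Bew A)))
    (hdiag : ∀ C : LA.Formula (Fin 1), ∃ G : LA.Sentence,
      T ⊨ᵇ (G ⇔ BoundedFormula.subst C fun _ => (num (gnum G) : LA.Term Empty))) :
    (∀ P : LA.Sentence, T ⊨ᵇ (boxS Bew P ⟹ P) → T ⊨ᵇ P) ∧
      (∀ H : LA.Sentence, T ⊨ᵇ (H ⇔ boxS Bew H) → T ⊨ᵇ H) := by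
  have hbox : T.HBLConditions (boxS Bew) := ⟨hbl1, hbl2, hbl3⟩
  refine ⟨fun P hP => ?_, fun H hH => ?_⟩
  · obtain ⟨G, hG⟩ := exists_iff_boxS_imp hdiag P
    exact hbox.models_of_box_imp hG hP
  · obtain ⟨G, hG⟩ := exists_iff_boxS_imp hdiag H
    exact hbox.models_of_iff_box hG hH

/-- Löb's theorem: if `T` is a computably axiomatized extension of Peano
arithmetic whose provability predicate satisfies the Hilbert–Bernays–Löb conditions and the
diagonal lemma, then for any sentence `P`, `T ⊢ □P → P` implies `T ⊢ P`; consequently any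
Henkin sentence `H` with `T ⊢ H ↔ □H` is provable in `T`. -/
theorem lob_theorem (T : LA.Theory) (hPA : PA ⊆ T)
    (hax : ComputablyAxiomatized T)
    (Bew : LA.Formula (Fin 1))
    (hbl1 : ∀ A : LA.Sentence, T ⊨ᵇ A → T ⊨ᵇ boxS Bew A)
    (hbl2 : ∀ A B : LA.Sentence, T ⊨ᵇ (boxS Bew (A ⟹ B) ⟹ boxS Bew A ⟹ boxS Bew B))
    (hbl3 : ∀ A : LA.Sentence, T ⊨ᵇ (boxS Bew A ⟹ boxS Bew (boxS Bew A)))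
    (hdiag : ∀ C : LA.Formula (Fin 1), ∃ G : LA.Sentence,
      T ⊨ᵇ (G ⇔ BoundedFormula.subst C fun _ => (num (gnum G) : LA.Term Empty))) :
    (∀ P : LA.Sentence, T ⊨ᵇ (boxS Bew P ⟹ P) → T ⊨ᵇ P) ∧
      (∀ H : LA.Sentence, T ⊨ᵇ (H ⇔ boxS Bew H) → T ⊨ᵇ H) :=
  lob_theorem_general T Bew hbl1 hbl2 hbl3 hdiag
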